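/- Fix N ≥ 1, constants α_a, β_a ∈ ℝ, continuously differentiable φ_{a,1}, φ_{a,2} : ℝ² → ℝ for a = 1,…,N, and continuously differentiable τ_{ab} : ℝ⁴ → ℝ for a ≠ b satisfying τ_{ab}(x,y,x',y') = −τ_{ba}(x',y',x,y). Define the skew-symmetric matrix-valued map π on ℝ^{3N} with coordinates (S_a, I_a, R_a)_{a=1}^N by π_{I_a R_a} = −α_a·I_a + β_a·S_a·I_a + φ_{a,2}(S_a,I_a), π_{S_a R_a} = −β_a·S_a·I_a + φ_{a,1}(S_a,I_a), π_{S_a I_a} = 0, π_{R_a R_b} = −τ_{ab}(S_a,I_a,S_b,I_b) for a ≠ b, and all other independent entries zero. Then π satisfies the Jacobi identity: for all x and all indices i,j,k, ∑_l (π_{l i}(x)·∂_l π_{j k}(x) + π_{l j}(x)·∂_l π_{k i}(x) + π_{l k}(x)·∂_l π_{i j}(x)) = 0. -/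

import Mathlib

/-- A pointwise skew-symmetric matrix-valued map `P : ℝⁿ → Matrix(n,n,ℝ)` satisfies the
Jacobi identity if for all `x` and indices `i j k`,
`∑ l, (P_{l i}(x)·∂_l P_{j k}(x) + P_{l j}(x)·∂_l P_{k i}(x) + P_{l k}(x)·∂_l P_{i j}(x)) = 0`. -/
def JacobiIdentity {n : Type*} [Fintype n] [DecidableEq n]
    (P : (n → ℝ) → Matrix n n ℝ) : Prop :=
  ∀ x : n → ℝ, ∀ i j k : n,
    ∑ l : n,
      (P x l i * fderiv ℝ (fun y => P y j k) x (Pi.single l 1) +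
        P x l j * fderiv ℝ (fun y => P y k i) x (Pi.single l 1) +
        P x l k * fderiv ℝ (fun y => P y i j) x (Pi.single l 1)) = 0

/-- The Poisson structure of `N` interacting generalized SIR populations, on `ℝ^{3N}` with
coordinates `(S_a, I_a, R_a) = (x (a,0), x (a,1), x (a,2))`:
`π_{S_a I_a} = 0`, `π_{S_a R_a} = −β_a·S_a·I_a + φ_{a,1}(S_a,I_a)`,
`π_{I_a R_a} = −α_a·I_a + β_a·S_a·I_a + φ_{a,2}(S_a,I_a)`,
`π_{R_a R_b} = −τ_{ab}(S_a,I_a,S_b,I_b)` for `a ≠ b`, all other independent entries zero. -/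
noncomputable def intSirPoisson (N : ℕ) (α β : Fin N → ℝ)
    (φ₁ φ₂ : Fin N → ℝ × ℝ → ℝ) (τ : Fin N → Fin N → ℝ × ℝ × ℝ × ℝ → ℝ)
    (x : Fin N × Fin 3 → ℝ) : Matrix (Fin N × Fin 3) (Fin N × Fin 3) ℝ :=
  fun p q =>
    if p.1 = q.1 then
      if p.2 = 0 ∧ q.2 = 2 then
        -β p.1 * x (p.1, 0) * x (p.1, 1) + φ₁ p.1 (x (p.1, 0), x (p.1, 1))
      else if p.2 = 2 ∧ q.2 = 0 then
        -(-β p.1 * x (p.1, 0) * x (p.1, 1) + φ₁ p.1 (x (p.1, 0), x (p.1, 1)))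
      else if p.2 = 1 ∧ q.2 = 2 then
        -α p.1 * x (p.1, 1) + β p.1 * x (p.1, 0) * x (p.1, 1) + φ₂ p.1 (x (p.1, 0), x (p.1, 1))
      else if p.2 = 2 ∧ q.2 = 1 then
        -(-α p.1 * x (p.1, 1) + β p.1 * x (p.1, 0) * x (p.1, 1) + φ₂ p.1 (x (p.1, 0), x (p.1, 1)))
      else 0
    else
      if p.2 = 2 ∧ q.2 = 2 then
        -τ p.1 q.1 (x (p.1, 0), x (p.1, 1), x (q.1, 0), x (q.1, 1))
      else 0

/-!
Write `T(i,j,k) = ∑_l π_{li} ∂_l π_{jk}`, so that the Jacobi sum is `T(i,j,k) + T(j,k,i) + T(k,i,j)`.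
For a skew-symmetric `π` the sum vanishes as soon as two indices coincide, so it suffices that
`T(i,j,k) = 0` whenever `i ∉ {j, k}`. The entry `π_{jk}` only depends on the `S` and `I`
coordinates of the populations of `j` and `k`, while an `S` or `I` coordinate `l` pairs
nontrivially only with the `R` coordinate of its own population. Hence a nonzero summand needs
`i = R_a` with `a` the population of `j` or `k`; but then `π_{jk}` vanishes identically.
-/

open scoped Matrix

theorem fderiv_apply_eq_zero_of_forall_add_smul_eq {𝕜 E F : Type*} [NontriviallyNormedField 𝕜]
    [NormedAddCommGroup E] [NormedSpace 𝕜 E] [NormedAddCommGroup F] [NormedSpace 𝕜 F]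
    {f : E → F} {x v : E} (h : ∀ t : 𝕜, f (x + t • v) = f x) : fderiv 𝕜 f x v = 0 := by
  by_cases hf : DifferentiableAt 𝕜 f x
  · have hline : HasLineDerivAt 𝕜 f 0 x v := by
      simpa only [HasLineDerivAt, h] using hasDerivAt_const (0 : 𝕜) (f x)
    exact (hf.hasFDerivAt.hasLineDerivAt v).unique hline
  · simp [fderiv_zero_of_not_differentiableAt hf]

section Jacobi

variable {n : Type*} [Fintype n] [DecidableEq n]

noncomputable def jacobiTerm (P : (n → ℝ) → Matrix n n ℝ) (x : n → ℝ) (i j k : n) : ℝ :=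
  ∑ l, P x l i * fderiv ℝ (fun y => P y j k) x (Pi.single l 1)

variable {P : (n → ℝ) → Matrix n n ℝ}

theorem jacobiTerm_swap (hP : ∀ y, (P y)ᵀ = -P y) (x : n → ℝ) (i j k : n) :
    jacobiTerm P x i k j = -jacobiTerm P x i j k := by
  have hkj : (fun y => P y k j) = fun y => -P y j k :=
    funext fun y => congrFun (congrFun (hP y) j) k
  simp [jacobiTerm, hkj]

theorem jacobiTerm_self (hP : ∀ y, (P y)ᵀ = -P y) (x : n → ℝ) (i j : n) :
    jacobiTerm P x i j j = 0 := by
  have h := jacobiTerm_swap hP x i j j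
  linarith

theorem jacobiIdentity_of_jacobiTerm_eq_zero (hP : ∀ y, (P y)ᵀ = -P y)
    (h : ∀ x i j k, i ≠ j → i ≠ k → jacobiTerm P x i j k = 0) : JacobiIdentity P := by
  intro x i j k
  have hsum : ∑ l, (P x l i * fderiv ℝ (fun y => P y j k) x (Pi.single l 1) +
      P x l j * fderiv ℝ (fun y => P y k i) x (Pi.single l 1) +
      P x l k * fderiv ℝ (fun y => P y i j) x (Pi.single l 1)) =
      jacobiTerm P x i j k + jacobiTerm P x j k i + jacobiTerm P x k i j := by
    simp only [jacobiTerm, Finset.sum_add_distrib]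
  rw [hsum]
  by_cases hij : i = j
  · subst hij
    rw [jacobiTerm_swap hP x i k i, jacobiTerm_self hP]
    ring
  by_cases hjk : j = k
  · subst hjk
    rw [jacobiTerm_swap hP x j i j, jacobiTerm_self hP]
    ring
  by_cases hik : i = k
  · subst hik
    rw [jacobiTerm_swap hP x i j i, jacobiTerm_self hP]
    ring
  rw [h x i j k hij hik, h x j k i hjk (Ne.symm hij), h x k i j (Ne.symm hik) (Ne.symm hjk)]
  ring

end Jacobi

section InteractingSIR

variable {N : ℕ} {α β : Fin N → ℝ} {φ₁ φ₂ : Fin N → ℝ × ℝ → ℝ}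
  {τ : Fin N → Fin N → ℝ × ℝ × ℝ × ℝ → ℝ}

theorem intSirPoisson_transpose
    (hτskew : ∀ a b, a ≠ b → ∀ u v u' v' : ℝ, τ a b (u, v, u', v') = -τ b a (u', v', u, v))
    (y : Fin N × Fin 3 → ℝ) :
    (intSirPoisson N α β φ₁ φ₂ τ y)ᵀ = -intSirPoisson N α β φ₁ φ₂ τ y := by
  ext ⟨a, s⟩ ⟨b, t⟩
  by_cases hab : a = b
  · subst hab
    fin_cases s <;> fin_cases t <;> simp [intSirPoisson]
  · by_cases hs : s = 2 <;> by_cases ht : t = 2 <;>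
      simp [intSirPoisson, hab, Ne.symm hab, hs, ht, hτskew a b hab]

theorem intSirPoisson_apply_eq_zero_left (y : Fin N × Fin 3 → ℝ) {p q : Fin N × Fin 3}
    (hp : p.2 ≠ 2) (hq : q ≠ (p.1, 2)) : intSirPoisson N α β φ₁ φ₂ τ y p q = 0 := by
  rcases p with ⟨a, s⟩
  rcases q with ⟨b, t⟩
  by_cases hab : a = b
  · subst hab
    have ht : t ≠ 2 := fun ht => hq (by rw [ht])
    fin_cases s <;> fin_cases t <;> simp_all [intSirPoisson]
  · simp [intSirPoisson, hab, hp]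

theorem intSirPoisson_apply_eq_zero_right (y : Fin N × Fin 3 → ℝ) {p q : Fin N × Fin 3}
    (hq : q.2 ≠ 2) (hp : p ≠ (q.1, 2)) : intSirPoisson N α β φ₁ φ₂ τ y p q = 0 := by
  rcases p with ⟨a, s⟩
  rcases q with ⟨b, t⟩
  by_cases hab : a = b
  · subst hab
    have hs : s ≠ 2 := fun hs => hp (by rw [hs])
    fin_cases s <;> fin_cases t <;> simp_all [intSirPoisson]
  · simp [intSirPoisson, hab, hq]

theorem intSirPoisson_add_smul_single (y : Fin N × Fin 3 → ℝ) (t : ℝ) {p q l : Fin N × Fin 3}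
    (hl : l.2 = 2 ∨ l.1 ≠ p.1 ∧ l.1 ≠ q.1) :
    intSirPoisson N α β φ₁ φ₂ τ (y + t • Pi.single l 1) p q =
      intSirPoisson N α β φ₁ φ₂ τ y p q := by
  have hcoord : ∀ r : Fin N × Fin 3, r.2 ≠ 2 → (r.1 = p.1 ∨ r.1 = q.1) →
      (y + t • Pi.single l 1 : Fin N × Fin 3 → ℝ) r = y r := by
    rintro r hr hrpq
    have hrl : r ≠ l := by rintro rfl; tauto
    simp [Pi.single_eq_of_ne hrl]
  simp only [intSirPoisson, hcoord (p.1, 0), hcoord (p.1, 1), hcoord (q.1, 0), hcoord (q.1, 1),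
    ne_eq, Fin.reduceEq, not_false_eq_true, true_or, or_true]

theorem fderiv_intSirPoisson_apply_single (x : Fin N × Fin 3 → ℝ) {p q l : Fin N × Fin 3}
    (hl : l.2 = 2 ∨ l.1 ≠ p.1 ∧ l.1 ≠ q.1) :
    fderiv ℝ (fun y => intSirPoisson N α β φ₁ φ₂ τ y p q) x (Pi.single l 1) = 0 :=
  fderiv_apply_eq_zero_of_forall_add_smul_eq fun t => intSirPoisson_add_smul_single x t hl

theorem jacobiTerm_intSirPoisson_eq_zero (x : Fin N × Fin 3 → ℝ) {i j k : Fin N × Fin 3}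
    (hij : i ≠ j) (hik : i ≠ k) : jacobiTerm (intSirPoisson N α β φ₁ φ₂ τ) x i j k = 0 := by
  refine Finset.sum_eq_zero fun l _ => ?_
  by_cases hl : l.2 = 2 ∨ l.1 ≠ j.1 ∧ l.1 ≠ k.1
  · rw [fderiv_intSirPoisson_apply_single x hl, mul_zero]
  have hl2 : l.2 ≠ 2 := fun h => hl (Or.inl h)
  by_cases hi : i = (l.1, 2)
  · have hjk : ∀ y, intSirPoisson N α β φ₁ φ₂ τ y j k = 0 := by
      subst hi
      intro y
      by_cases hlj : l.1 = j.1
      · exact intSirPoisson_apply_eq_zero_left y (fun h => hij (Prod.ext hlj h.symm))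
          (hlj ▸ hik.symm)
      · have hlk : l.1 = k.1 := by tauto
        exact intSirPoisson_apply_eq_zero_right y (fun h => hik (Prod.ext hlk h.symm))
          (hlk ▸ hij.symm)
    simp [hjk]
  · rw [intSirPoisson_apply_eq_zero_left x hl2 hi, zero_mul]

end InteractingSIR

theorem interactingSIR_poisson_jacobi_general (N : ℕ) (α β : Fin N → ℝ)
    (φ₁ φ₂ : Fin N → ℝ × ℝ → ℝ) (τ : Fin N → Fin N → ℝ × ℝ × ℝ × ℝ → ℝ)
    (hτskew : ∀ a b, a ≠ b → ∀ u v u' v' : ℝ, τ a b (u, v, u', v') = -τ b a (u', v', u, v)) :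
    JacobiIdentity (intSirPoisson N α β φ₁ φ₂ τ) :=
  jacobiIdentity_of_jacobiTerm_eq_zero (intSirPoisson_transpose hτskew)
    fun x _ _ _ hij hik => jacobiTerm_intSirPoisson_eq_zero x hij hik

theorem interactingSIR_poisson_jacobi (N : ℕ) (hN : 1 ≤ N) (α β : Fin N → ℝ)
    (φ₁ φ₂ : Fin N → ℝ × ℝ → ℝ) (τ : Fin N → Fin N → ℝ × ℝ × ℝ × ℝ → ℝ)
    (hφ₁ : ∀ a, ContDiff ℝ 1 (φ₁ a)) (hφ₂ : ∀ a, ContDiff ℝ 1 (φ₂ a))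
    (hτ : ∀ a b, a ≠ b → ContDiff ℝ 1 (τ a b))
    (hτskew : ∀ a b, a ≠ b → ∀ u v u' v' : ℝ, τ a b (u, v, u', v') = -τ b a (u', v', u, v)) :
    JacobiIdentity (intSirPoisson N α β φ₁ φ₂ τ) :=
  interactingSIR_poisson_jacobi_general N α β φ₁ φ₂ τ hτskew
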